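/- arXiv:1811.07725 — 2 statements merged into one kernel-verified Lean document; each statement's English description precedes it below -/
import Mathlib

section
/- Let m be an even positive integer, let e_0 = 1, e_1, …, e_l = m−1 be positive integers with e_i | e_{i+1}, set f_j = (m−1)/e_j, let γ_j ∈ F_{2^{e_j}}, let Q_j(x) = Tr^{m−1}_1( Σ_{i=1}^{(f_j−1)/2} x^{2^{i e_j}+1} ), and for a ∈ F_{2^{m−1}} define f_a(x₁,x₂) = Σ_{j=0}^{l−1} Q_j(γ_j a x₁) + x₂ Tr^{m−1}_1(a x₁). Then for all x₁, z₁ ∈ F_{2^{m−1}} and x₂, z₂ ∈ F_2: f_a(x₁+z₁, x₂+z₂) + f_a(x₁,x₂) + f_a(z₁,z₂) = Tr^{m−1}_1( a z₁ [ Σ_{j=0}^{l−1} ( a γ_j² x₁ + Tr^{m−1}_{e_j}(a γ_j² x₁) ) + x₂ ] ) + Tr^{m−1}_1(a x₁) z₂. -/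
open Finset

noncomputable section

abbrev Fq (n : ℕ) := GaloisField 2 n

noncomputable instance (n : ℕ) : Fintype (Fq n) := Fintype.ofFinite _

/-- Absolute trace from `F_{2^n}` to `F_2`. -/
noncomputable def tr1 (n : ℕ) (x : Fq n) : ZMod 2 :=
  Algebra.trace (ZMod 2) (Fq n) x

/-- `(-1)^x` for `x : F_2`, as an integer. -/
def chi (x : ZMod 2) : ℤ := (-1 : ℤ) ^ x.val

/-- Walsh transform of a Boolean function on `F_{2^n} × F_2`. -/
noncomputable def walsh (n : ℕ) (f : Fq n × ZMod 2 → ZMod 2)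
    (lam : Fq n) (nu : ZMod 2) : ℤ :=
  ∑ x : Fq n × ZMod 2, chi (f x + tr1 n (lam * x.1) + nu * x.2)

/-- A Boolean function on `F_{2^{m-1}} × F_2` is bent if all its Walsh coefficients
are `± 2^(m/2)`. -/
def IsBent (m : ℕ) (f : Fq (m - 1) × ZMod 2 → ZMod 2) : Prop :=
  ∀ lam nu, walsh (m - 1) f lam nu = 2 ^ (m / 2) ∨ walsh (m - 1) f lam nu = -(2 ^ (m / 2))

/-- Cyclic bent function on `F_{2^{m-1}} × F_2`. -/
def IsCyclicBent (m : ℕ) (f : Fq (m - 1) × ZMod 2 → ZMod 2) : Prop :=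
  ∀ a b : Fq (m - 1), a ≠ b → ∀ ε : ZMod 2,
    IsBent m fun x => f (a * x.1, x.2) + f (b * x.1, x.2 + ε)

/-- The quadratic function `Q_j(x) = Tr^{m-1}_1 (Σ_{i=1}^{(f_j-1)/2} x^{2^{i e_j}+1})`,
where `f_j = (m-1)/e_j`. -/
noncomputable def Qfun (m e : ℕ) (x : Fq (m - 1)) : ZMod 2 :=
  tr1 (m - 1) (∑ i ∈ Finset.Icc 1 (((m - 1) / e - 1) / 2), x ^ (2 ^ (i * e) + 1))

/-- Relative trace `Tr^n_r(x) = Σ_{i=0}^{n/r - 1} x^{2^{r i}}` from `F_{2^n}` onto the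
subfield `F_{2^r}` (for `r ∣ n`), valued in `F_{2^n}`. -/
noncomputable def relTr (n r : ℕ) (x : Fq n) : Fq n :=
  ∑ i ∈ Finset.range (n / r), x ^ 2 ^ (r * i)

/-- The function `f_a(x₁,x₂) = Σ_{j<l} Q_j(γ_j a x₁) + x₂ Tr^{m-1}_1(a x₁)`. -/
noncomputable def fA (m l : ℕ) (e : ℕ → ℕ) (γ : ℕ → Fq (m - 1)) (a : Fq (m - 1))
    (x : Fq (m - 1) × ZMod 2) : ZMod 2 :=
  (∑ j ∈ Finset.range l, Qfun m (e j) (γ j * (a * x.1))) + x.2 * tr1 (m - 1) (a * x.1)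

/-! The polar form of `Q_j` is obtained by expanding `(x + z)^(2^k + 1)` in characteristic 2
and moving Frobenius powers across the trace, `Tr(x z^(2^k)) = Tr(x^(2^(n-k)) z)`. Because
`f_j` is odd, the exponents `i e_j` with `1 ≤ i ≤ (f_j - 1)/2` and their reflections
`(f_j - i) e_j` together run over `e_j, 2 e_j, …, (f_j - 1) e_j`, which is `x + Tr_{e_j}(x)`.
Scalars of `F_{2^{e_j}}` commute with `Tr_{e_j}`, and `x₂ Tr(a x₁)` is bilinear. -/

theorem Algebra.trace_pow_card {K L : Type*} [Field K] [Fintype K] [Field L] [Algebra K L]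
    [Algebra.IsAlgebraic K L] (x : L) :
    Algebra.trace K L (x ^ Fintype.card K) = Algebra.trace K L x :=
  Algebra.trace_eq_of_algEquiv (FiniteField.frobeniusAlgEquivOfAlgebraic K L) x

theorem tr1_add (n : ℕ) (x y : Fq n) : tr1 n (x + y) = tr1 n x + tr1 n y :=
  map_add _ x y

theorem tr1_sum {ι : Type*} (n : ℕ) (s : Finset ι) (f : ι → Fq n) :
    tr1 n (∑ i ∈ s, f i) = ∑ i ∈ s, tr1 n (f i) :=
  map_sum _ f s

theorem tr1_pow_two_pow (n k : ℕ) (x : Fq n) : tr1 n (x ^ 2 ^ k) = tr1 n x := by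
  induction k with
  | zero => rw [pow_zero, pow_one]
  | succ k ih =>
    have h := Algebra.trace_pow_card (K := ZMod 2) (x ^ 2 ^ k)
    rw [ZMod.card] at h
    rw [pow_succ, pow_mul]
    exact h.trans ih

theorem Fq.pow_two_pow_self (n : ℕ) (x : Fq n) : x ^ 2 ^ n = x := by
  rcases eq_or_ne n 0 with rfl | hn
  · rw [pow_zero, pow_one]
  · rw [← GaloisField.card 2 n hn, Nat.card_eq_fintype_card, FiniteField.pow_card]

theorem tr1_mul_pow_two_pow {n k j : ℕ} (h : k + j = n) (x z : Fq n) :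
    tr1 n (x * z ^ 2 ^ k) = tr1 n (x ^ 2 ^ j * z) := by
  rw [← tr1_pow_two_pow n j (x * z ^ 2 ^ k), mul_pow, ← pow_mul, ← pow_add, h,
    Fq.pow_two_pow_self]

theorem tr1_mul_algebraMap (n : ℕ) (x : Fq n) (c : ZMod 2) :
    tr1 n (x * algebraMap (ZMod 2) (Fq n) c) = c * tr1 n x := by
  rw [mul_comm, ← Algebra.smul_def, tr1, map_smul, smul_eq_mul, tr1]

theorem relTr_mul_of_pow_eq (n r : ℕ) {c : Fq n} (hc : c ^ 2 ^ r = c) (x : Fq n) :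
    relTr n r (c * x) = c * relTr n r x := by
  have hfix (i : ℕ) : c ^ 2 ^ (r * i) = c := by
    induction i with
    | zero => rw [mul_zero, pow_zero, pow_one]
    | succ i ih => rw [mul_add_one, pow_add, pow_mul, ih, hc]
  simp only [relTr, mul_sum, mul_pow, hfix]

theorem CharTwo.add_pow_two_pow_add_one {R : Type*} [CommRing R] [CharP R 2] (k : ℕ) (x z : R) :
    (x + z) ^ (2 ^ k + 1) + x ^ (2 ^ k + 1) + z ^ (2 ^ k + 1) = x ^ 2 ^ k * z + x * z ^ 2 ^ k := by
  rw [pow_succ, add_pow_char_pow]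
  linear_combination (x ^ (2 ^ k + 1) + z ^ (2 ^ k + 1)) * CharTwo.two_eq_zero (R := R)

theorem add_relTr_eq_sum_Ico {n r : ℕ} (h : 0 < n / r) (x : Fq n) :
    x + relTr n r x = ∑ i ∈ Ico 1 (n / r), x ^ 2 ^ (r * i) := by
  rw [relTr, sum_range_eq_add_Ico _ h, mul_zero, pow_zero, pow_one, ← add_assoc,
    CharTwo.add_self_eq_zero, zero_add]

theorem dvd_of_le_of_forall_dvd_succ {M : Type*} [Monoid M] {e : ℕ → M} {l : ℕ}
    (h : ∀ i < l, e i ∣ e (i + 1)) {j : ℕ} (hj : j ≤ l) : e j ∣ e l := by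
  suffices ∀ k, j ≤ k → k ≤ l → e j ∣ e k from this l hj le_rfl
  intro k hjk
  induction k, hjk using Nat.le_induction with
  | base => exact fun _ => dvd_rfl
  | succ k _ ih => exact fun hkl => (ih (by omega)).trans (h k (by omega))

theorem Qfun_polar {m e : ℕ} (he : e ∣ m - 1) (hodd : Odd ((m - 1) / e)) (x z : Fq (m - 1)) :
    Qfun m e (x + z) + Qfun m e x + Qfun m e z = tr1 (m - 1) (z * (x + relTr (m - 1) e x)) := by
  set f := (m - 1) / e with hf
  obtain ⟨s, hs⟩ := hodd
  have hef : e * f = m - 1 := Nat.mul_div_cancel' he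
  have hexpand : Qfun m e (x + z) + Qfun m e x + Qfun m e z
      = ∑ i ∈ Ico 1 (s + 1), tr1 (m - 1) (x ^ 2 ^ (e * i) * z)
        + ∑ i ∈ Ico 1 (s + 1), tr1 (m - 1) (x * z ^ 2 ^ (e * i)) := by
    rw [Qfun, Qfun, Qfun, ← hf, show (f - 1) / 2 = s by omega, ← Ico_add_one_right_eq_Icc,
      ← tr1_add, ← tr1_add, ← sum_add_distrib, ← sum_add_distrib, ← sum_add_distrib,
      tr1_sum]
    simp only [CharTwo.add_pow_two_pow_add_one, tr1_add, mul_comm _ e]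
  have hreflect : ∑ i ∈ Ico 1 (s + 1), tr1 (m - 1) (x * z ^ 2 ^ (e * i))
      = ∑ i ∈ Ico (s + 1) f, tr1 (m - 1) (x ^ 2 ^ (e * i) * z) := by
    calc ∑ i ∈ Ico 1 (s + 1), tr1 (m - 1) (x * z ^ 2 ^ (e * i))
        = ∑ i ∈ Ico 1 (s + 1), tr1 (m - 1) (x ^ 2 ^ (e * (f - i)) * z) := by
          refine sum_congr rfl fun i hi => tr1_mul_pow_two_pow ?_ x z
          have := (mem_Ico.mp hi).2
          rw [← hef, ← mul_add, Nat.add_sub_cancel' (by omega)]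
      _ = ∑ i ∈ Ico (s + 1) f, tr1 (m - 1) (x ^ 2 ^ (e * i) * z) := by
          rw [sum_Ico_reflect (fun i => tr1 (m - 1) (x ^ 2 ^ (e * i) * z)) 1
              (by omega : s + 1 ≤ f + 1), show f + 1 - (s + 1) = s + 1 by omega,
            Nat.add_sub_cancel]
  rw [hexpand, hreflect, sum_Ico_consecutive _ (by omega) (by omega),
    add_relTr_eq_sum_Ico (by omega), ← hf, mul_sum, tr1_sum]
  simp only [mul_comm z]

theorem Qfun_mul_polar {m e : ℕ} (he : e ∣ m - 1) (hodd : Odd ((m - 1) / e)) {c : Fq (m - 1)}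
    (hc : c ^ 2 ^ e = c) (x z : Fq (m - 1)) :
    Qfun m e (c * (x + z)) + Qfun m e (c * x) + Qfun m e (c * z)
      = tr1 (m - 1) (z * (c ^ 2 * x + relTr (m - 1) e (c ^ 2 * x))) := by
  have hc2 : (c ^ 2) ^ 2 ^ e = c ^ 2 := by rw [← pow_mul, mul_comm, pow_mul, hc]
  rw [mul_add, Qfun_polar he hodd, relTr_mul_of_pow_eq _ _ hc, relTr_mul_of_pow_eq _ _ hc2]
  congr 1
  ring

theorem stmt4_general (m l : ℕ) (hm : Even m) (hm0 : 0 < m)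
    (e : ℕ → ℕ) (hel : e l = m - 1)
    (hdvd : ∀ i < l, e i ∣ e (i + 1))
    (γ : ℕ → Fq (m - 1))
    (hγ : ∀ j < l, γ j ^ (2 ^ e j) = γ j)  -- γ_j ∈ F_{2^{e_j}}
    (a : Fq (m - 1))
    (x₁ z₁ : Fq (m - 1)) (x₂ z₂ : ZMod 2) :
    fA m l e γ a (x₁ + z₁, x₂ + z₂) + fA m l e γ a (x₁, x₂) + fA m l e γ a (z₁, z₂)
      = tr1 (m - 1) (a * z₁ *
          ((∑ j ∈ Finset.range l,
              (a * γ j ^ 2 * x₁ + relTr (m - 1) (e j) (a * γ j ^ 2 * x₁)))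
            + algebraMap (ZMod 2) (Fq (m - 1)) x₂))
        + tr1 (m - 1) (a * x₁) * z₂ := by
  have hodd : Odd (m - 1) := by
    obtain ⟨k, rfl⟩ := hm
    exact ⟨k - 1, by omega⟩
  have hQ (j : ℕ) (hj : j ∈ range l) :
      Qfun m (e j) (γ j * (a * (x₁ + z₁))) + Qfun m (e j) (γ j * (a * x₁))
          + Qfun m (e j) (γ j * (a * z₁))
        = tr1 (m - 1)
            (a * z₁ * (a * γ j ^ 2 * x₁ + relTr (m - 1) (e j) (a * γ j ^ 2 * x₁))) := by
    have hj := mem_range.mp hj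
    have he : e j ∣ m - 1 := hel ▸ dvd_of_le_of_forall_dvd_succ hdvd hj.le
    rw [mul_add a, Qfun_mul_polar he (hodd.of_dvd_nat (Nat.div_dvd_of_dvd he)) (hγ j hj),
      show a * γ j ^ 2 * x₁ = γ j ^ 2 * (a * x₁) by ring]
  simp only [fA]
  rw [mul_add (a * z₁), tr1_add, tr1_mul_algebraMap, mul_sum, tr1_sum, ← sum_congr rfl hQ,
    sum_add_distrib, sum_add_distrib, mul_add a x₁ z₁, tr1_add]
  linear_combination
    (x₂ * tr1 (m - 1) (a * x₁) + z₂ * tr1 (m - 1) (a * z₁)) * CharTwo.two_eq_zero (R := ZMod 2)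

/-- the symplectic form associated with `f_a`. -/
theorem stmt4 (m l : ℕ) (hm : Even m) (hm0 : 0 < m)
    (e : ℕ → ℕ) (hpos : ∀ i ≤ l, 0 < e i)
    (he0 : e 0 = 1) (hel : e l = m - 1)
    (hdvd : ∀ i < l, e i ∣ e (i + 1))
    (γ : ℕ → Fq (m - 1))
    (hγ : ∀ j < l, γ j ^ (2 ^ e j) = γ j)  -- γ_j ∈ F_{2^{e_j}}
    (a : Fq (m - 1))
    (x₁ z₁ : Fq (m - 1)) (x₂ z₂ : ZMod 2) :
    fA m l e γ a (x₁ + z₁, x₂ + z₂) + fA m l e γ a (x₁, x₂) + fA m l e γ a (z₁, z₂)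
      = tr1 (m - 1) (a * z₁ *
          ((∑ j ∈ Finset.range l,
              (a * γ j ^ 2 * x₁ + relTr (m - 1) (e j) (a * γ j ^ 2 * x₁)))
            + algebraMap (ZMod 2) (Fq (m - 1)) x₂))
        + tr1 (m - 1) (a * x₁) * z₂ :=
  stmt4_general m l hm hm0 e hel hdvd γ hγ a x₁ z₁ x₂ z₂
end
end

section
/- Let m be an even positive integer, let g be a bent function on F_{2^{m−1}} × F_2 with g(0,0) = g(0,1) = 0, let b ∈ F_{2^{m−1}} \ F_2, and let H = { λ ∈ F_{2^{m−1}} : Tr^{m−1}_1(λ) = 0 }. For u, ε ∈ F_2 set T_{u,ε} = { (λ₁,λ₂) ∈ H × H : W_g(b λ₁ + λ₂, u) = (−1)^ε 2^{m/2} }. Then #T_{0,ε} = 2^{m−2} ( 2^{m−3} + (−1)^ε 2^{(m−4)/2} ) and #T_{1,ε} = 2^{m−2} · 2^{m−3}. -/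
open Finset

noncomputable section

noncomputable instance (n : ℕ) : DecidableEq (Fq n) := Classical.decEq _

/-!
Since `b ∉ 𝔽₂`, the functionals `Tr x` and `Tr (b x)` are linearly independent, so
`x ↦ (Tr x, Tr (b x))` maps `𝔽_{2^n}` (`n = m - 1`) onto `𝔽₂²` with fibres of size `2^(n-2)`.
Substituting `μ = b λ₁ + λ₂`, every `μ` with `W_g(μ, u) = ±2^(m/2)` therefore accounts for
`2^(n-2)` pairs. The number of such `μ` follows from bentness and orthogonality of additive
characters: `∑_μ W_g(μ, u) = 2^n ∑_y (-1)^(g(0,y) + u y)`, which is `2^(n+1)` for `u = 0` and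
`0` for `u = 1` because `g(0, ·) = 0`.
-/

theorem card_fiber_mul_card_eq_of_surjective {G M F : Type*} [AddGroup G] [Fintype G]
    [AddMonoid M] [Fintype M] [DecidableEq M] [FunLike F G M] [AddMonoidHomClass F G M]
    {f : F} (hf : Function.Surjective f) (y : M) :
    #{x | f x = y} * Fintype.card M = Fintype.card G := by
  calc #{x | f x = y} * Fintype.card M = ∑ z : M, #{x | f x = z} := by
        rw [sum_congr rfl fun z _ => AddMonoidHom.card_fiber_eq_of_mem_range f (hf z) (hf y),
          sum_const, card_univ, smul_eq_mul, mul_comm]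
    _ = Fintype.card G := (card_eq_sum_card_fiberwise fun x _ => mem_univ (f x)).symm

theorem notMem_range_algebraMap_zmod_two {A : Type*} [Semiring A] [Algebra (ZMod 2) A] {b : A}
    (hb0 : b ≠ 0) (hb1 : b ≠ 1) : b ∉ Set.range (algebraMap (ZMod 2) A) := by
  rintro ⟨c, rfl⟩
  fin_cases c
  · exact hb0 (map_zero _)
  · exact hb1 (map_one _)

section TracePairs

variable {K L : Type*} [Field K] [Field L] [Algebra K L] [FiniteDimensional K L]
  [Algebra.IsSeparable K L]

theorem surjective_trace_prod_trace_mul {b : L} (hb : b ∉ Set.range (algebraMap K L)) :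
    Function.Surjective
      ((Algebra.trace K L).prod ((Algebra.trace K L).comp (LinearMap.mulLeft K b))) := by
  rw [← LinearMap.range_eq_top]
  by_contra hne
  obtain ⟨f, hf0, hf⟩ := (LinearMap.range _).exists_le_ker_of_lt_top (lt_top_iff_ne_top.2 hne)
  have hf_apply (p : K × K) : f p = f (1, 0) * p.1 + f (0, 1) * p.2 := by
    conv_lhs => rw [show p = p.1 • (1, 0) + p.2 • (0, 1) by ext <;> simp]
    rw [map_add, map_smul, map_smul, smul_eq_mul, smul_eq_mul, mul_comm, mul_comm p.2]
  set c := algebraMap K L (f (1, 0)) + algebraMap K L (f (0, 1)) * b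
  have hc : c = 0 := by
    refine (traceForm_nondegenerate K L).1 c fun x => ?_
    have hx := hf (LinearMap.mem_range_self _ x)
    rw [LinearMap.mem_ker, hf_apply] at hx
    rw [Algebra.traceForm_apply, show c * x = f (1, 0) • x + f (0, 1) • (b * x) by
      simp only [c, Algebra.smul_def]; ring, map_add, map_smul, map_smul]
    simpa using hx
  by_cases h01 : f (0, 1) = 0
  · have h10 : f (1, 0) = 0 := by simpa [c, h01] using hc
    exact hf0 (LinearMap.ext fun p => by rw [hf_apply, h10, h01]; simp)
  · refine hb ⟨-(f (1, 0) / f (0, 1)), ?_⟩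
    have h01' : algebraMap K L (f (0, 1)) ≠ 0 := by simpa using h01
    rw [map_neg, map_div₀]
    field_simp
    linear_combination -hc

variable [Fintype K] [Fintype L] [DecidableEq K] {b : L}

theorem card_trace_fiber_mul_card_sq (hb : b ∉ Set.range (algebraMap K L)) (μ : L) :
    #{x | Algebra.trace K L x = 0 ∧ Algebra.trace K L (μ - b * x) = 0} * Fintype.card K ^ 2
      = Fintype.card L := by
  rw [sq, ← Fintype.card_prod,
    ← card_fiber_mul_card_eq_of_surjective (surjective_trace_prod_trace_mul hb)
    (0, Algebra.trace K L μ)]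
  congr 2
  ext x
  simpa [Prod.ext_iff, sub_eq_zero] using fun _ => eq_comm

theorem card_trace_zero_pairs_mul_card_sq {α : Type*} [DecidableEq α]
    (hb : b ∉ Set.range (algebraMap K L)) (W : L → α) (t : α) :
    #{p : L × L | Algebra.trace K L p.1 = 0 ∧ Algebra.trace K L p.2 = 0 ∧ W (b * p.1 + p.2) = t}
        * Fintype.card K ^ 2
      = #{μ | W μ = t} * Fintype.card L := by
  have hsplit : #{p : L × L | Algebra.trace K L p.1 = 0 ∧ Algebra.trace K L p.2 = 0 ∧
      W (b * p.1 + p.2) = t} = ∑ μ, if W μ = t then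
        #{x | Algebra.trace K L x = 0 ∧ Algebra.trace K L (μ - b * x) = 0} else 0 := by
    calc _ = ∑ x : L, ∑ μ : L, if Algebra.trace K L x = 0 ∧
          Algebra.trace K L (μ - b * x) = 0 ∧ W μ = t then 1 else 0 := by
          rw [card_filter, Fintype.sum_prod_type]
          refine sum_congr rfl fun x _ => ?_
          rw [← (Equiv.subRight (b * x)).sum_comp]
          simp only [Equiv.subRight_apply, add_sub_cancel]
      _ = _ := by
          rw [sum_comm]
          refine sum_congr rfl fun μ _ => ?_
          split_ifs with h <;> simp only [h, and_true, and_false, card_filter, if_false,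
            sum_const_zero]
  rw [hsplit, sum_mul]
  simp_rw [ite_mul, zero_mul, card_trace_fiber_mul_card_sq hb]
  rw [sum_ite, sum_const_zero, add_zero, sum_const, smul_eq_mul]

end TracePairs

theorem chi_add (x y : ZMod 2) : chi (x + y) = chi x * chi y := by
  revert x y
  decide

def traceChar (n : ℕ) : AddChar (Fq n) ℤ where
  toFun x := chi (tr1 n x)
  map_zero_eq_one' := by simp [tr1, chi]
  map_add_eq_mul' x y := by rw [tr1, map_add, chi_add]; rfl

theorem traceChar_isPrimitive (n : ℕ) : (traceChar n).IsPrimitive := by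
  refine AddChar.IsPrimitive.of_ne_one fun h => ?_
  obtain ⟨x, hx⟩ := Algebra.trace_surjective (ZMod 2) (Fq n) 1
  have hx1 := DFunLike.congr_fun h x
  simp only [traceChar, AddChar.coe_mk, AddChar.one_apply, tr1, hx] at hx1
  exact absurd hx1 (by decide)

theorem sum_walsh (n : ℕ) (g : Fq n × ZMod 2 → ZMod 2) (u : ZMod 2) :
    ∑ μ, walsh n g μ u = Fintype.card (Fq n) * ∑ y : ZMod 2, chi (g (0, y) + u * y) := by
  have hinner (x : Fq n × ZMod 2) : ∑ μ, chi (g x + tr1 n (μ * x.1) + u * x.2)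
      = chi (g x + u * x.2) * ((if x.1 = 0 then Fintype.card (Fq n) else 0 : ℕ) : ℤ) := by
    rw [← AddChar.sum_mulShift x.1 (traceChar_isPrimitive n), mul_sum]
    refine sum_congr rfl fun μ _ => ?_
    rw [add_right_comm, chi_add]
    rfl
  simp only [walsh]
  rw [sum_comm, sum_congr rfl fun x _ => hinner x, Fintype.sum_prod_type]
  simp [mul_sum, mul_comm]

theorem two_mul_card_filter_eq_mul {α : Type*} [Fintype α] (f : α → ℤ) {P : ℤ} (hP : P ≠ 0)
    (hf : ∀ x, f x = P ∨ f x = -P) (e : ℕ) :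
    2 * #{x | f x = (-1) ^ e * P} * P = Fintype.card α * P + (-1) ^ e * ∑ x, f x := by
  have hpoint (x : α) : 2 * (if f x = (-1) ^ e * P then 1 else 0) * P = P + (-1) ^ e * f x := by
    rcases neg_one_pow_eq_or ℤ e with he | he <;> rcases hf x with hx | hx <;>
      simp [he, hx, neg_ne_self.mpr hP, self_ne_neg.mpr hP, two_mul]
  rw [natCast_card_filter, mul_sum, sum_mul, sum_congr rfl fun x _ => hpoint x, sum_add_distrib,
    sum_const, card_univ, nsmul_eq_mul, mul_sum]

theorem card_walsh_pairs_mul (n : ℕ) (hn : n ≠ 0) (g : Fq n × ZMod 2 → ZMod 2) {b : Fq n}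
    (hb : b ∉ Set.range (algebraMap (ZMod 2) (Fq n))) (u : ZMod 2) {P : ℤ} (hP : P ≠ 0)
    (hbent : ∀ μ, walsh n g μ u = P ∨ walsh n g μ u = -P) (e : ℕ) :
    8 * (#{p : Fq n × Fq n | tr1 n p.1 = 0 ∧ tr1 n p.2 = 0 ∧
        walsh n g (b * p.1 + p.2) u = (-1) ^ e * P} : ℤ) * P
      = 4 ^ n * (P + (-1) ^ e * ∑ y : ZMod 2, chi (g (0, y) + u * y)) := by
  have hcard : Fintype.card (Fq n) = 2 ^ n := by
    rw [← Nat.card_eq_fintype_card, GaloisField.card 2 n hn]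
  have hpairs := card_trace_zero_pairs_mul_card_sq hb (fun μ => walsh n g μ u) ((-1) ^ e * P)
  have hsigns := two_mul_card_filter_eq_mul (fun μ => walsh n g μ u) hP hbent e
  rw [ZMod.card, hcard] at hpairs
  rw [sum_walsh, hcard] at hsigns
  have hpairs' := congrArg (Nat.cast : ℕ → ℤ) hpairs
  push_cast at hpairs' hsigns
  unfold tr1
  rw [show (4 : ℤ) ^ n = 2 ^ n * 2 ^ n by rw [← mul_pow]; norm_num]
  linear_combination (2 * P) * hpairs' + 2 ^ n * hsigns

theorem cast_eq_of_eight_mul_mul_two_pow {m C : ℕ} {w : ℤ} (hm : Even m) (hm0 : 0 < m)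
    (h : 8 * (C : ℤ) * 2 ^ (m / 2) = 4 ^ (m - 1) * (2 ^ (m / 2) + 2 * w)) :
    (C : ℝ) = 2 ^ ((m : ℝ) - 2) * (2 ^ ((m : ℝ) - 3) + w * 2 ^ (((m : ℝ) - 4) / 2)) := by
  obtain ⟨k, hk⟩ := hm
  have hmR : (m : ℝ) = k + k := by exact_mod_cast hk
  -- every power of two involved is a monomial in `s`
  set s : ℝ := 2 ^ (((m : ℝ) - 4) / 2)
  have h2 : (2 : ℝ) ^ ((m : ℝ) - 2) = s * s * 2 ^ (2 : ℝ) := by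
    rw [← Real.rpow_add two_pos, ← Real.rpow_add two_pos]; ring_nf
  have h3 : (2 : ℝ) ^ ((m : ℝ) - 3) = s * s * 2 ^ (1 : ℝ) := by
    rw [← Real.rpow_add two_pos, ← Real.rpow_add two_pos]; ring_nf
  have hP : (2 : ℝ) ^ (m / 2) = s * 2 ^ (2 : ℝ) := by
    rw [show m / 2 = k by omega, ← Real.rpow_natCast, ← Real.rpow_add two_pos]
    congr 1
    linarith
  have h4 : (4 : ℝ) ^ (m - 1) = s * s * s * s * 2 ^ (6 : ℝ) := by
    rw [show (4 : ℝ) = 2 ^ (2 : ℕ) by norm_num, ← pow_mul, ← Real.rpow_natCast,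
      ← Real.rpow_add two_pos, ← Real.rpow_add two_pos, ← Real.rpow_add two_pos,
      ← Real.rpow_add two_pos]
    congr 1
    push_cast [Nat.cast_sub (show 1 ≤ m by omega)]
    ring
  have hR : 8 * (C : ℝ) * 2 ^ (m / 2) = 4 ^ (m - 1) * (2 ^ (m / 2) + 2 * w) := by exact_mod_cast h
  rw [hP, h4] at hR
  rw [h2, h3]
  norm_num at hR ⊢
  refine mul_left_cancel₀ (show 32 * s ≠ 0 by positivity) ?_
  linear_combination hR

/-- counting pairs `(λ₁,λ₂) ∈ H × H` (with
`H = {λ : Tr(λ) = 0}`) on which `W_g(b λ₁ + λ₂, u)` takes a prescribed sign. -/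
theorem stmt14 (m : ℕ) (hm : Even m) (hm0 : 0 < m)
    (g : Fq (m - 1) × ZMod 2 → ZMod 2) (hg : IsBent m g)
    (h00 : g (0, 0) = 0) (h01 : g (0, 1) = 0)
    (b : Fq (m - 1)) (hb0 : b ≠ 0) (hb1 : b ≠ 1) (ε : ZMod 2) :
    (((Finset.univ.filter fun p : Fq (m - 1) × Fq (m - 1) =>
        tr1 (m - 1) p.1 = 0 ∧ tr1 (m - 1) p.2 = 0 ∧
        walsh (m - 1) g (b * p.1 + p.2) 0 = (-1 : ℤ) ^ ε.val * 2 ^ (m / 2)).card : ℝ)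
      = (2 : ℝ) ^ ((m : ℝ) - 2)
          * ((2 : ℝ) ^ ((m : ℝ) - 3) + (-1 : ℝ) ^ ε.val * (2 : ℝ) ^ (((m : ℝ) - 4) / 2))) ∧
    (((Finset.univ.filter fun p : Fq (m - 1) × Fq (m - 1) =>
        tr1 (m - 1) p.1 = 0 ∧ tr1 (m - 1) p.2 = 0 ∧
        walsh (m - 1) g (b * p.1 + p.2) 1 = (-1 : ℤ) ^ ε.val * 2 ^ (m / 2)).card : ℝ)
      = (2 : ℝ) ^ ((m : ℝ) - 2) * (2 : ℝ) ^ ((m : ℝ) - 3)) := by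
  have hP : (2 : ℤ) ^ (m / 2) ≠ 0 := pow_ne_zero _ two_ne_zero
  have hcount (u : ZMod 2) := card_walsh_pairs_mul (m - 1) (by grind) g
    (notMem_range_algebraMap_zmod_two hb0 hb1) u hP (fun μ => hg μ u) ε.val
  have hchi (u : ZMod 2) : ∑ y : ZMod 2, chi (g (0, y) + u * y) = 1 + chi u := by
    rw [show (univ : Finset (ZMod 2)) = {0, 1} from rfl, sum_pair zero_ne_one, h00, h01]
    simp [chi]
  constructor
  · have h := cast_eq_of_eight_mul_mul_two_pow (w := (-1) ^ ε.val) hm hm0 (by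
      linear_combination hcount 0 + 4 ^ (m - 1) * (-1) ^ ε.val * (hchi 0).trans
        (show 1 + chi 0 = 2 by decide))
    simpa only [Int.cast_pow, Int.cast_neg, Int.cast_one] using h
  · have h := cast_eq_of_eight_mul_mul_two_pow (w := 0) hm hm0 (by
      linear_combination hcount 1 + 4 ^ (m - 1) * (-1) ^ ε.val * (hchi 1).trans
        (show 1 + chi 1 = 0 by decide))
    simpa only [Int.cast_zero, zero_mul, add_zero] using h
end
end
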